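/- arXiv:2303.03237 — 7 statements merged into one kernel-verified Lean document; each statement's English description precedes it below -/
import Mathlib

section
/- Let d ≥ 1, X = [0,1]^d, and let f : X → ℝ be Lipschitz continuous with (minimal) Lipschitz constant |f|₁ < ∞ (with respect to the Euclidean norm). Then for every temperature ε > 0, the maximum M_f = max_{x∈X} f(x) satisfies |M_f − ε·L_{f/ε}| ≤ ε·d·log(1 + 3·d^{−1/2}·|f|₁/ε); more precisely, M_f − ε·d·log(1 + 3·d^{−1/2}·|f|₁/ε) ≤ ε·L_{f/ε} ≤ M_f. -/
open MeasureTheory Real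

noncomputable section

/-- The unit cube `[0,1]^d` in `ℝ^d`. -/
def cube (d : ℕ) : Set (Fin d → ℝ) := Set.Icc 0 1

/-- The partition function `Z_f = ∫_X exp(f(x)) dx`. -/
def partZ {d : ℕ} (f : (Fin d → ℝ) → ℝ) : ℝ := ∫ x in cube d, Real.exp (f x)

/-- The log-partition function `L_f = log Z_f`. -/
def logPart {d : ℕ} (f : (Fin d → ℝ) → ℝ) : ℝ := Real.log (partZ f)

/-- The Gibbs measure `P_f` with density `exp(f(x))/Z_f` w.r.t. Lebesgue measure on the cube. -/
def gibbs {d : ℕ} (f : (Fin d → ℝ) → ℝ) : Measure (Fin d → ℝ) :=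
  (volume.restrict (cube d)).withDensity fun x => ENNReal.ofReal (Real.exp (f x) / partZ f)

/-- Essential supremum norm `‖h‖_∞` over the cube. -/
def supNormOn {d : ℕ} (h : (Fin d → ℝ) → ℝ) : ℝ :=
  essSup (fun x => |h x|) (volume.restrict (cube d))

/-- Total variation distance between two measures: `sup_A |P(A) − Q(A)|`. -/
def DTV {α : Type*} [MeasurableSpace α] (P Q : Measure α) : ℝ :=
  ⨆ A : {A : Set α // MeasurableSet A}, |(P A.1).toReal - (Q A.1).toReal|

/-- `f` is bounded on the cube. -/
def BddOnCube {d : ℕ} (f : (Fin d → ℝ) → ℝ) : Prop := ∃ C, ∀ x ∈ cube d, |f x| ≤ C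

/-!
Since the cube has volume one, `Z_{f/ε} ≤ exp (M/ε)`. Conversely, a maximiser `x₀` lies in a
subcube of side `δ ≤ 1`, on which `f ≥ M - K √d δ`; hence `Z_{f/ε} ≥ δ^d exp ((M - K √d δ)/ε)`,
i.e. `ε L_{f/ε} ≥ M - ε d (c δ / 3 - log δ)` with `c = 3 K / (√d ε)`. The choice
`δ = min 1 (3/c)` makes `c δ / 3 - log δ ≤ log (1 + c)`.
-/

open Set

lemma div_three_le_log_one_add {c : ℝ} (hc : 0 ≤ c) (hc3 : c ≤ 3) : c / 3 ≤ log (1 + c) := by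
  -- `log` lies above its chord between `1` and `4`, and `log 4 ≥ 1`.
  have hlog4 : 1 ≤ log 4 := by
    rw [le_log_iff_exp_le (by norm_num)]
    linarith [exp_one_lt_d9]
  have hchord := strictConcaveOn_log_Ioi.concaveOn.2 (mem_Ioi.2 one_pos)
    (mem_Ioi.2 (by norm_num : (0 : ℝ) < 4)) (by linarith : 0 ≤ 1 - c / 3)
    (by linarith : 0 ≤ c / 3) (by ring)
  simp only [smul_eq_mul, log_one, mul_one] at hchord
  rw [show 1 - c / 3 + c / 3 * 4 = 1 + c by ring] at hchord
  nlinarith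

lemma exists_mul_div_three_sub_log_le {c : ℝ} (hc : 0 ≤ c) :
    ∃ δ, 0 < δ ∧ δ ≤ 1 ∧ c * δ / 3 - log δ ≤ log (1 + c) := by
  rcases le_or_gt c 3 with hc3 | hc3
  · exact ⟨1, one_pos, le_rfl, by simpa using div_three_le_log_one_add hc hc3⟩
  · refine ⟨3 / c, by positivity, (div_le_one (by linarith)).2 hc3.le, ?_⟩
    have hlog3 : 1 ≤ log 3 := by
      rw [le_log_iff_exp_le (by norm_num)]
      linarith [exp_one_lt_d9]
    have hlogc : log c ≤ log (1 + c) := log_le_log (by linarith) (by linarith)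
    rw [log_div (by norm_num) (by positivity), show c * (3 / c) / 3 = 1 by field_simp]
    linarith

lemma sqrt_sum_sq_sub_le {ι : Type*} [Fintype ι] {x y : ι → ℝ} {δ : ℝ} (hδ : 0 ≤ δ)
    (h : ∀ i, |x i - y i| ≤ δ) : √(∑ i, (x i - y i) ^ 2) ≤ √(Fintype.card ι) * δ := by
  calc √(∑ i, (x i - y i) ^ 2) ≤ √(∑ _i : ι, δ ^ 2) :=
        sqrt_le_sqrt (Finset.sum_le_sum fun i _ => sq_le_sq' (abs_le.1 (h i)).1 (abs_le.1 (h i)).2)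
    _ = √(Fintype.card ι) * δ := by
        rw [Finset.sum_const, Finset.card_univ, nsmul_eq_mul, sqrt_mul (Nat.cast_nonneg _),
          sqrt_sq hδ]

lemma lipschitzOnWith_of_abs_sub_le_mul_sqrt {ι : Type*} [Fintype ι] {s : Set (ι → ℝ)}
    {f : (ι → ℝ) → ℝ} {K : ℝ} (hK : 0 ≤ K)
    (hf : ∀ x ∈ s, ∀ y ∈ s, |f x - f y| ≤ K * √(∑ i, (x i - y i) ^ 2)) :
    LipschitzOnWith (K * √(Fintype.card ι)).toNNReal f s := by
  refine LipschitzOnWith.of_dist_le_mul fun x hx y hy => ?_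
  rw [coe_toNNReal _ (by positivity), Real.dist_eq, mul_assoc]
  refine (hf x hx y hy).trans (mul_le_mul_of_nonneg_left (sqrt_sum_sq_sub_le dist_nonneg
    fun i => ?_) hK)
  rw [← Real.dist_eq]
  exact dist_le_pi_dist x y i

lemma exists_Icc_add_const_subset_unit_cube {ι : Type*} {x₀ : ι → ℝ} (hx₀ : x₀ ∈ Icc 0 1)
    {δ : ℝ} (hδ₀ : 0 ≤ δ) (hδ₁ : δ ≤ 1) :
    ∃ a : ι → ℝ, x₀ ∈ Icc a (a + fun _ => δ) ∧ Icc a (a + fun _ => δ) ⊆ Icc 0 1 := by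
  refine ⟨fun i => min (x₀ i) (1 - δ), ⟨fun i => min_le_left _ _, fun i => ?_⟩,
    fun x hx => ⟨fun i => ?_, fun i => ?_⟩⟩
  · have hx₀i : x₀ i ≤ 1 := hx₀.2 i
    exact sub_le_iff_le_add.1 (le_min (by linarith) (by linarith))
  · exact (le_min (hx₀.1 i) (sub_nonneg.2 hδ₁)).trans (hx.1 i)
  · have hxi : x i ≤ min (x₀ i) (1 - δ) + δ := hx.2 i
    show x i ≤ 1
    linarith [min_le_right (x₀ i) (1 - δ)]

lemma abs_sub_le_of_mem_Icc_add_const {ι : Type*} {a x y : ι → ℝ} {δ : ℝ}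
    (hx : x ∈ Icc a (a + fun _ => δ)) (hy : y ∈ Icc a (a + fun _ => δ)) (i : ι) :
    |x i - y i| ≤ δ := by
  have hx₁ := hx.1 i
  have hx₂ := hx.2 i
  have hy₁ := hy.1 i
  have hy₂ := hy.2 i
  simp only [Pi.add_apply] at hx₂ hy₂
  exact abs_sub_le_iff.2 ⟨by linarith, by linarith⟩

lemma sub_le_of_mem_Icc_add_const {ι : Type*} [Fintype ι] {s : Set (ι → ℝ)}
    {f : (ι → ℝ) → ℝ} {K : ℝ} (hK : 0 ≤ K)
    (hf : ∀ x ∈ s, ∀ y ∈ s, |f x - f y| ≤ K * √(∑ i, (x i - y i) ^ 2)) {a x y : ι → ℝ} {δ : ℝ}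
    (hδ : 0 ≤ δ) (hbox : Icc a (a + fun _ => δ) ⊆ s) (hx : x ∈ Icc a (a + fun _ => δ))
    (hy : y ∈ Icc a (a + fun _ => δ)) : f x - K * (√(Fintype.card ι) * δ) ≤ f y := by
  have hclose := sqrt_sum_sq_sub_le hδ (abs_sub_le_of_mem_Icc_add_const hx hy)
  have := (le_abs_self _).trans ((hf x (hbox hx) y (hbox hy)).trans
    (mul_le_mul_of_nonneg_left hclose hK))
  linarith

lemma volume_cube (d : ℕ) : volume (cube d) = 1 := by
  simp [cube, Real.volume_Icc_pi]

lemma partZ_le_exp {d : ℕ} {g : (Fin d → ℝ) → ℝ} {m : ℝ} (hg : ∀ x ∈ cube d, g x ≤ m) :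
    partZ g ≤ exp m := by
  have h := norm_setIntegral_le_of_norm_le_const (f := fun x => exp (g x))
    (volume_cube d ▸ ENNReal.one_lt_top)
    fun x hx => by rw [norm_eq_abs, abs_exp]; exact exp_le_exp.2 (hg x hx)
  simpa [partZ, measureReal_def, volume_cube] using (le_abs_self _).trans h

lemma pow_mul_exp_le_partZ {d : ℕ} {g : (Fin d → ℝ) → ℝ}
    (hg : IntegrableOn (fun x => exp (g x)) (cube d)) {a : Fin d → ℝ} {δ m : ℝ} (hδ : 0 ≤ δ)
    (hbox : Icc a (a + fun _ => δ) ⊆ cube d) (hm : ∀ x ∈ Icc a (a + fun _ => δ), m ≤ g x) :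
    δ ^ d * exp m ≤ partZ g := by
  have hab : a ≤ a + fun _ => δ := fun i => by simpa using hδ
  calc δ ^ d * exp m = exp m * volume.real (Icc a (a + fun _ => δ)) := by
        simp [measureReal_def, Real.volume_Icc_pi_toReal hab, mul_comm]
    _ ≤ ∫ x in Icc a (a + fun _ => δ), exp (g x) :=
        setIntegral_ge_of_const_le_real measurableSet_Icc isCompact_Icc.measure_lt_top.ne
          (fun x hx => exp_le_exp.2 (hm x hx)) (hg.mono_set hbox)
    _ ≤ partZ g :=
        setIntegral_mono_set hg (Filter.Eventually.of_forall fun _ => (exp_pos _).le)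
          hbox.eventuallyLE

lemma logPart_le_of_le {d : ℕ} {g : (Fin d → ℝ) → ℝ} {m : ℝ} (hZ : 0 < partZ g)
    (hg : ∀ x ∈ cube d, g x ≤ m) : logPart g ≤ m :=
  (log_le_iff_le_exp hZ).2 (partZ_le_exp hg)

lemma add_le_logPart_of_pow_mul_exp_le {d : ℕ} {g : (Fin d → ℝ) → ℝ} {δ m : ℝ} (hδ : 0 < δ)
    (hZ : δ ^ d * exp m ≤ partZ g) : d * log δ + m ≤ logPart g := by
  have h := log_le_log (by positivity) hZ
  rwa [log_mul (by positivity) (exp_ne_zero _), log_pow, log_exp] at h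

theorem optimization_limit_general (d : ℕ) (f : (Fin d → ℝ) → ℝ)
    (K : ℝ) (hK : 0 ≤ K)
    (hLip : ∀ x ∈ cube d, ∀ y ∈ cube d,
      |f x - f y| ≤ K * Real.sqrt (∑ i, (x i - y i) ^ 2))
    (M : ℝ) (hM : IsGreatest (f '' cube d) M)
    (ε : ℝ) (hε : 0 < ε) :
    |M - ε * logPart (fun x => f x / ε)| ≤ ε * d * Real.log (1 + 3 * K / (Real.sqrt d * ε)) ∧
    M - ε * d * Real.log (1 + 3 * K / (Real.sqrt d * ε)) ≤ ε * logPart (fun x => f x / ε) ∧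
    ε * logPart (fun x => f x / ε) ≤ M := by
  set c := 3 * K / (√d * ε)
  obtain ⟨δ, hδ₀, hδ₁, hδc⟩ := exists_mul_div_three_sub_log_le (c := c) (by positivity)
  obtain ⟨x₀, hx₀, rfl⟩ := hM.1
  obtain ⟨a, hx₀a, hbox⟩ := exists_Icc_add_const_subset_unit_cube hx₀ hδ₀.le hδ₁
  have hint : IntegrableOn (fun x => exp (f x / ε)) (cube d) :=
    (continuous_exp.comp_continuousOn ((lipschitzOnWith_of_abs_sub_le_mul_sqrt hK hLip)
      |>.continuousOn.div_const ε)).integrableOn_compact isCompact_Icc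
  have hZ := pow_mul_exp_le_partZ hint hδ₀.le hbox fun x hx =>
    div_le_div_of_nonneg_right (sub_le_of_mem_Icc_add_const hK hLip hδ₀.le hbox hx₀a hx) hε.le
  rw [Fintype.card_fin] at hZ
  have hupper : ε * logPart (fun x => f x / ε) ≤ f x₀ :=
    (le_div_iff₀' hε).1 <| logPart_le_of_le (hZ.trans_lt' (by positivity)) fun x hx =>
      div_le_div_of_nonneg_right (hM.2 ⟨x, hx, rfl⟩) hε.le
  have hlower := add_le_logPart_of_pow_mul_exp_le hδ₀ hZ
  have hKc : K * (√d * δ) = ε * d * (c * δ / 3) := by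
    simp only [c]
    -- `d / √d = √d` also holds for `d = 0`
    nth_rw 1 [← div_sqrt (x := (d : ℝ))]
    field_simp
  have hlow : f x₀ - ε * d * log (1 + c) ≤ ε * logPart (fun x => f x / ε) :=
    calc f x₀ - ε * d * log (1 + c) ≤ f x₀ - ε * d * (c * δ / 3 - log δ) := by gcongr
      _ = ε * (d * log δ + (f x₀ - K * (√d * δ)) / ε) := by rw [hKc]; field_simp; ring
      _ ≤ ε * logPart (fun x => f x / ε) := by gcongr
  refine ⟨?_, hlow, hupper⟩
  rw [abs_of_nonneg (sub_nonneg.2 hupper)]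
  linarith

/-- Optimization limit, Lemma 1.1, first part.
If `f` is Lipschitz on `X = [0,1]^d` with (minimal) Lipschitz constant `K` w.r.t. the
Euclidean norm, `M` is the maximum of `f` on `X`, and `ε > 0`, then
`|M − ε L_{f/ε}| ≤ ε d log(1 + 3 d^{−1/2} K / ε)`; more precisely,
`M − ε d log(1 + 3 d^{−1/2} K / ε) ≤ ε L_{f/ε} ≤ M`. -/
theorem optimization_limit (d : ℕ) (hd : 1 ≤ d) (f : (Fin d → ℝ) → ℝ)
    (K : ℝ) (hK : 0 ≤ K)
    (hLip : ∀ x ∈ cube d, ∀ y ∈ cube d,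
      |f x - f y| ≤ K * Real.sqrt (∑ i, (x i - y i) ^ 2))
    (M : ℝ) (hM : IsGreatest (f '' cube d) M)
    (ε : ℝ) (hε : 0 < ε) :
    |M - ε * logPart (fun x => f x / ε)| ≤ ε * d * Real.log (1 + 3 * K / (Real.sqrt d * ε)) ∧
    M - ε * d * Real.log (1 + 3 * K / (Real.sqrt d * ε)) ≤ ε * logPart (fun x => f x / ε) ∧
    ε * logPart (fun x => f x / ε) ≤ M :=
  optimization_limit_general d f K hK hLip M hM ε hε
end
end

section
/- Let p ∈ [0,1], c ≥ 0, and a ∈ [−c, c]. Then |log(1 + p·(e^a − 1))| ≤ min{ c, p·(e^c − 1) }. -/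
/-- Lemma B.6: for `p ∈ [0,1]`, `c ≥ 0`, and `a ∈ [−c, c]`,
`|log(1 + p(e^a − 1))| ≤ min{c, p(e^c − 1)}`. -/
theorem abs_log_one_add_mul_exp_sub_one_le (p c a : ℝ)
    (hp0 : 0 ≤ p) (hp1 : p ≤ 1) (hc : 0 ≤ c) (ha : a ∈ Set.Icc (-c) c) :
    |Real.log (1 + p * (Real.exp a - 1))| ≤ min c (p * (Real.exp c - 1)) := by
  obtain ⟨ha1, ha2⟩ := ha
  set x := 1 + p * (Real.exp a - 1) with hxdef
  have he1 : Real.exp (-c) ≤ Real.exp a := Real.exp_le_exp.2 ha1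
  have he2 : Real.exp a ≤ Real.exp c := Real.exp_le_exp.2 ha2
  have he3 : Real.exp (-c) ≤ 1 := Real.exp_le_one_iff.2 (by linarith)
  have he4 : 1 ≤ Real.exp c := Real.one_le_exp hc
  have he5 : Real.exp (-c) * Real.exp c = 1 := by
    rw [← Real.exp_add]; simp
  have hepos : 0 < Real.exp (-c) := Real.exp_pos _
  have hx_lb : Real.exp (-c) ≤ x := by nlinarith
  have hx_ub : x ≤ Real.exp c := by nlinarith
  have hx_pos : 0 < x := lt_of_lt_of_le hepos hx_lb
  refine le_min (abs_le.2 ⟨?_, ?_⟩) (abs_le.2 ⟨?_, ?_⟩)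
  · exact (Real.le_log_iff_exp_le hx_pos).2 hx_lb
  · exact (Real.log_le_iff_le_exp hx_pos).2 hx_ub
  · have h := Real.log_le_sub_one_of_pos (x := x⁻¹) (by positivity)
    rw [Real.log_inv] at h
    have hinv : x⁻¹ ≤ Real.exp c := by
      rw [inv_le_comm₀ hx_pos (by positivity), ← Real.exp_neg]
      exact hx_lb
    have hx1 : 1 - x ≤ p * (1 - Real.exp (-c)) := by nlinarith
    have hxinv : x * x⁻¹ = 1 := mul_inv_cancel₀ (ne_of_gt hx_pos)
    nlinarith [mul_nonneg hp0 (sub_nonneg.2 he3), mul_le_mul_of_nonneg_right hx1 (le_of_lt (inv_pos.2 hx_pos))]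
  · have h := Real.log_le_sub_one_of_pos hx_pos
    nlinarith
end

section
/- Let d ≥ 1, X = [0,1]^d, and let f : X → ℝ be bounded and measurable. Then the thermodynamic integration identity holds: L_f = ∫_0^1 ( ∫_X f(x) dP_{βf}(x) ) dβ, i.e., the log-partition function of f equals the integral over inverse temperatures β ∈ [0,1] of the mean of f under the Gibbs measure P_{βf}. -/
open MeasureTheory Real

noncomputable section

/-!
The log-partition function `β ↦ L_{βf}` is the cumulant generating function of `f` under the
uniform measure on the cube, and `P_{βf}` is the exponentially tilted measure. A bounded `f` has
exponential moments of every order, so the cumulant generating function is analytic on all of `ℝ`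
with derivative the tilted mean `∫ f dP_{βf}`; the identity is the fundamental theorem of calculus
on `[0, 1]`, with `L_0 = log 1 = 0`.
-/

namespace ProbabilityTheory

variable {Ω : Type*} {mΩ : MeasurableSpace Ω} {μ : Measure Ω} {X : Ω → ℝ}

lemma integrableExpSet_eq_univ_of_ae_abs_le [IsFiniteMeasure μ] (hX : AEMeasurable X μ) {C : ℝ}
    (hC : ∀ᵐ ω ∂μ, |X ω| ≤ C) : integrableExpSet X μ = Set.univ := by
  refine Set.eq_univ_of_forall fun t => ?_
  refine Integrable.of_bound (hX.const_mul t).exp.aestronglyMeasurable (exp (|t| * C)) ?_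
  filter_upwards [hC] with ω hω
  rw [norm_of_nonneg (exp_nonneg _), exp_le_exp]
  calc t * X ω ≤ |t| * |X ω| := by rw [← abs_mul]; exact le_abs_self _
    _ ≤ |t| * C := mul_le_mul_of_nonneg_left hω (abs_nonneg t)

lemma cgf_sub_cgf_eq_intervalIntegral_integral_tilted {a b : ℝ}
    (hab : Set.uIcc a b ⊆ interior (integrableExpSet X μ)) :
    cgf X μ b - cgf X μ a = ∫ t in a..b, (μ.tilted (t * X ·))[X] := by
  have hcgf : AnalyticOnNhd ℝ (cgf X μ) (interior (integrableExpSet X μ)) := analyticOnNhd_cgf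
  have hderiv : IntervalIntegrable (deriv (cgf X μ)) volume a b :=
    (hcgf.deriv.continuousOn.mono hab).intervalIntegrable
  rw [← intervalIntegral.integral_deriv_eq_sub (fun t ht => (hcgf t (hab ht)).differentiableAt)
    hderiv]
  exact intervalIntegral.integral_congr fun t ht => (integral_tilted_mul_self (hab ht)).symm

end ProbabilityTheory

open ProbabilityTheory

instance isProbabilityMeasure_volume_restrict_cube (d : ℕ) :
    IsProbabilityMeasure (volume.restrict (cube d)) :=
  ⟨by simp [cube, Real.volume_Icc_pi]⟩

theorem thermodynamic_integration_identity_general (d : ℕ) (f : (Fin d → ℝ) → ℝ)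
    (hmeas : Measurable f) (hbdd : BddOnCube f) :
    logPart f = ∫ β in Set.Icc (0 : ℝ) 1, (∫ x, f x ∂(gibbs (fun y => β * f y))) := by
  set μ := volume.restrict (cube d)
  obtain ⟨C, hC⟩ := hbdd
  have hexp : integrableExpSet f μ = Set.univ :=
    integrableExpSet_eq_univ_of_ae_abs_le hmeas.aemeasurable
      ((ae_restrict_iff' measurableSet_Icc).2 (Filter.Eventually.of_forall hC))
  have hL : logPart f = cgf f μ 1 - cgf f μ 0 := by
    simp [cgf, mgf, logPart, partZ, μ]
  rw [hL, cgf_sub_cgf_eq_intervalIntegral_integral_tilted (by simp [hexp]),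
    intervalIntegral.integral_of_le zero_le_one, integral_Icc_eq_integral_Ioc]
  rfl

/-- thermodynamic integration identity, Section 3.3:
for bounded measurable `f` on `X = [0,1]^d`,
`L_f = ∫_0^1 (∫_X f dP_{βf}) dβ`. -/
theorem thermodynamic_integration_identity (d : ℕ) (hd : 1 ≤ d) (f : (Fin d → ℝ) → ℝ)
    (hmeas : Measurable f) (hbdd : BddOnCube f) :
    logPart f = ∫ β in Set.Icc (0 : ℝ) 1, (∫ x, f x ∂(gibbs (fun y => β * f y))) :=
  thermodynamic_integration_identity_general d f hmeas hbdd
end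
end

section
/- Let d ≥ 1, X = [0,1]^d, B > 0, n ≥ 1, and let f : X → ℝ, f(x) = −(B/d)·(x_1 + ⋯ + x_d). Let X_1, …, X_n be i.i.d. uniform on X and let P̃_f be the law of the Monte Carlo sample X_I, i.e., the probability measure defined by P̃_f(A) := E[ Σ_{i=1}^n (exp(f(X_i)) / Σ_{j=1}^n exp(f(X_j))) · 1_A(X_i) ] for measurable A ⊆ X. If B·n^{−1/d} ≥ 4d·log(4d), then D_TV(P_f, P̃_f) ≥ 1/2. -/
open MeasureTheory Real

noncomputable section

/-!
Test the set `A = [0,t]^d` with `t = (4n)^(-1/d)`. The sample `X_I` can only lie in `A` if some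
`Xᵢ` does, so `P̃_f(A) ≤ n · vol A = 1/4`. The Gibbs measure factorizes over the coordinates, so
`P_f(A) = ((1 - e^(-ct)) / (1 - e^(-c)))^d` with `c = B/d`; the hypothesis on `B` gives
`ct ≥ log (4d)`, hence `P_f(A) ≥ (1 - 1/(4d))^d ≥ 3/4` by Bernoulli's inequality.
-/

theorem integral_exp_neg_mul_Icc {c : ℝ} (hc : c ≠ 0) {t : ℝ} (ht : 0 ≤ t) :
    ∫ u in Set.Icc 0 t, exp (-c * u) = (1 - exp (-c * t)) / c := by
  rw [integral_Icc_eq_integral_Ioc, ← intervalIntegral.integral_of_le ht,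
    intervalIntegral.integral_comp_mul_left (fun u => exp u) (neg_ne_zero.mpr hc), integral_exp]
  simp only [mul_zero, exp_zero, smul_eq_mul, neg_mul]
  field_simp
  ring

theorem integral_Icc_pi_exp_neg_mul_sum {ι : Type*} [Fintype ι] {c : ℝ} (hc : c ≠ 0) {t : ℝ}
    (ht : 0 ≤ t) :
    ∫ x in Set.Icc (0 : ι → ℝ) (fun _ => t), exp (-c * ∑ i, x i)
      = ((1 - exp (-c * t)) / c) ^ Fintype.card ι := by
  have hbox : Set.Icc (0 : ι → ℝ) (fun _ => t) = Set.univ.pi fun _ => Set.Icc 0 t :=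
    (Set.pi_univ_Icc _ _).symm
  simp_rw [hbox, volume_pi, Measure.restrict_pi_pi, Finset.mul_sum, exp_sum]
  rw [integral_fintype_prod_eq_pow (fun u => exp (-c * u)), integral_exp_neg_mul_Icc hc ht]

instance isProbabilityMeasure_restrict_cube (d : ℕ) :
    IsProbabilityMeasure (volume.restrict (cube d)) :=
  ⟨by simp [cube, Real.volume_Icc_pi]⟩

theorem measureReal_restrict_cube_Icc {d : ℕ} {t : ℝ} (ht₀ : 0 ≤ t) (ht₁ : t ≤ 1) :
    (volume.restrict (cube d)).real (Set.Icc 0 fun _ => t) = t ^ d := by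
  rw [measureReal_restrict_apply measurableSet_Icc,
    Set.inter_eq_self_of_subset_left (t := cube d) (Set.Icc_subset_Icc le_rfl fun _ => ht₁),
    measureReal_def, Real.volume_Icc_pi_toReal (a := 0) fun _ => ht₀]
  simp

theorem integrableOn_cube_exp {d : ℕ} {f : (Fin d → ℝ) → ℝ} (hf : Continuous f) :
    IntegrableOn (fun x => exp (f x)) (cube d) :=
  hf.rexp.continuousOn.integrableOn_compact isCompact_Icc

theorem gibbs_toReal_of_subset {d : ℕ} {f : (Fin d → ℝ) → ℝ}
    (hf : IntegrableOn (fun x => exp (f x)) (cube d)) {A : Set (Fin d → ℝ)}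
    (hA : MeasurableSet A) (hAX : A ⊆ cube d) :
    (gibbs f A).toReal = (∫ x in A, exp (f x)) / partZ f := by
  have hdensity : ∀ x, 0 ≤ exp (f x) / partZ f :=
    fun x => div_nonneg (exp_pos _).le (integral_nonneg fun y => (exp_pos _).le)
  rw [gibbs, withDensity_apply _ hA, Measure.restrict_restrict hA,
    Set.inter_eq_self_of_subset_left hAX, ← integral_div,
    ← ofReal_integral_eq_lintegral_ofReal ((hf.mono_set hAX).div_const _)
      (.of_forall hdensity), ENNReal.toReal_ofReal (integral_nonneg hdensity)]

theorem isProbabilityMeasure_gibbs {d : ℕ} {f : (Fin d → ℝ) → ℝ}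
    (hf : IntegrableOn (fun x => exp (f x)) (cube d)) : IsProbabilityMeasure (gibbs f) := by
  have hZ : 0 < partZ f := integral_exp_pos hf
  constructor
  rw [gibbs, withDensity_apply _ MeasurableSet.univ, Measure.restrict_univ,
    ← ofReal_integral_eq_lintegral_ofReal (hf.div_const _)
      (.of_forall fun x => by positivity), integral_div, ← partZ, div_self hZ.ne',
    ENNReal.ofReal_one]

theorem gibbs_Icc_toReal_of_linear {d : ℕ} {c : ℝ} (hc : c ≠ 0) {t : ℝ} (ht₀ : 0 ≤ t)
    (ht₁ : t ≤ 1) :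
    (gibbs (fun x : Fin d → ℝ => -c * ∑ i, x i) (Set.Icc 0 fun _ => t)).toReal
      = ((1 - exp (-c * t)) / (1 - exp (-c))) ^ d := by
  rw [gibbs_toReal_of_subset (integrableOn_cube_exp (by fun_prop)) measurableSet_Icc
      (Set.Icc_subset_Icc le_rfl fun _ => ht₁),
    partZ, cube, integral_Icc_pi_exp_neg_mul_sum hc ht₀,
    show (1 : Fin d → ℝ) = fun _ => 1 from rfl, integral_Icc_pi_exp_neg_mul_sum hc zero_le_one,
    Fintype.card_fin, mul_one, div_pow, div_pow, div_pow,
    div_div_div_cancel_right₀ (pow_ne_zero _ hc)]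

theorem three_quarters_le_one_sub_inv_pow (d : ℕ) : 3 / 4 ≤ (1 - 1 / (4 * d : ℝ)) ^ d := by
  rcases Nat.eq_zero_or_pos d with rfl | hd
  · norm_num
  have hd' : (1 : ℝ) ≤ d := by exact_mod_cast hd
  calc (3 / 4 : ℝ) = 1 + d * -(1 / (4 * d)) := by field_simp; ring
    _ ≤ (1 + -(1 / (4 * d))) ^ d := one_add_mul_le_pow (by
        rw [neg_le_neg_iff, div_le_iff₀ (by positivity)]; linarith) d
    _ = (1 - 1 / (4 * d)) ^ d := by ring

theorem three_quarters_le_gibbs_Icc_of_linear {d : ℕ} (hd : 0 < d) {c : ℝ} (hc : 0 < c) {t : ℝ}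
    (ht₀ : 0 ≤ t) (ht₁ : t ≤ 1) (hct : log (4 * d) ≤ c * t) :
    3 / 4 ≤ (gibbs (fun x : Fin d → ℝ => -c * ∑ i, x i) (Set.Icc 0 fun _ => t)).toReal := by
  have h4d : (0 : ℝ) < 4 * d := by positivity
  have hexp : exp (-c * t) ≤ 1 / (4 * d) := by
    rw [one_div, ← exp_log h4d, ← exp_neg, exp_le_exp]
    linarith
  have hinv_le_one : 1 / (4 * d : ℝ) ≤ 1 := by
    rw [div_le_one h4d]
    have : (1 : ℝ) ≤ d := by exact_mod_cast hd
    linarith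
  have hden : 0 < 1 - exp (-c) := sub_pos.mpr (exp_lt_one_iff.mpr (neg_lt_zero.mpr hc))
  rw [gibbs_Icc_toReal_of_linear hc.ne' ht₀ ht₁]
  refine (three_quarters_le_one_sub_inv_pow d).trans (pow_le_pow_left₀ (by linarith) ?_ d)
  calc 1 - 1 / (4 * d : ℝ) ≤ 1 - exp (-c * t) := by linarith
    _ ≤ (1 - exp (-c * t)) / (1 - exp (-c)) :=
      le_div_self (by linarith) hden (by linarith [exp_pos (-c)])

/-- `P̃(A) = E[∑ᵢ w(Xᵢ) / (∑ⱼ w(Xⱼ)) · 1_A(Xᵢ)]` for `Xᵢ` i.i.d. with law `μ`: the law of the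
sample `X_I` drawn from `X₁, …, Xₙ` with probabilities proportional to the weights `w(Xᵢ)`. -/
def mcSampleLaw {α : Type*} [MeasurableSpace α] (μ : Measure α) (ι : Type*) [Fintype ι]
    (w : α → ℝ) (A : Set α) : ℝ :=
  ∫ ω : ι → α, ∑ i, w (ω i) / (∑ j, w (ω j)) * A.indicator 1 (ω i) ∂Measure.pi fun _ => μ

section MonteCarlo

variable {α ι : Type*} [Fintype ι] {w : α → ℝ} {A : Set α} {ω : ι → α}

theorem sum_weight_mul_indicator_nonneg (hw : ∀ x, 0 ≤ w x) :
    0 ≤ ∑ i, w (ω i) / (∑ j, w (ω j)) * A.indicator 1 (ω i) :=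
  Finset.sum_nonneg fun i _ => mul_nonneg
    (div_nonneg (hw _) (Finset.sum_nonneg fun j _ => hw _)) (Set.indicator_nonneg (by simp) _)

theorem sum_weight_mul_indicator_le_one (hw : ∀ x, 0 ≤ w x) :
    ∑ i, w (ω i) / (∑ j, w (ω j)) * A.indicator 1 (ω i) ≤ 1 :=
  calc ∑ i, w (ω i) / (∑ j, w (ω j)) * A.indicator 1 (ω i)
      ≤ ∑ i, w (ω i) / (∑ j, w (ω j)) :=
        Finset.sum_le_sum fun i _ => mul_le_of_le_one_right
          (div_nonneg (hw _) (Finset.sum_nonneg fun j _ => hw _))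
          (Set.indicator_le_self' (by simp) _)
    _ = (∑ i, w (ω i)) / ∑ j, w (ω j) := Finset.sum_div ..|>.symm
    _ ≤ 1 := div_self_le_one _

theorem sum_weight_mul_indicator_le_sum_indicator (hw : ∀ x, 0 ≤ w x) :
    ∑ i, w (ω i) / (∑ j, w (ω j)) * A.indicator 1 (ω i) ≤ ∑ i, A.indicator 1 (ω i) :=
  Finset.sum_le_sum fun i _ => mul_le_of_le_one_left (Set.indicator_nonneg (by simp) _)
    (div_le_one_of_le₀ (Finset.single_le_sum (fun j _ => hw (ω j)) (Finset.mem_univ i))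
      (Finset.sum_nonneg fun j _ => hw _))

variable [MeasurableSpace α] (μ : Measure α) (ι)

theorem mcSampleLaw_nonneg (hw : ∀ x, 0 ≤ w x) : 0 ≤ mcSampleLaw μ ι w A :=
  integral_nonneg fun _ => sum_weight_mul_indicator_nonneg hw

theorem mcSampleLaw_le_one [IsProbabilityMeasure μ] (hw : ∀ x, 0 ≤ w x) :
    mcSampleLaw μ ι w A ≤ 1 :=
  (integral_mono_of_nonneg (.of_forall fun _ => sum_weight_mul_indicator_nonneg hw)
    (integrable_const 1) (.of_forall fun _ => sum_weight_mul_indicator_le_one hw)).trans_eq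
    (by simp)

theorem mcSampleLaw_le_card_mul [IsProbabilityMeasure μ] (hw : ∀ x, 0 ≤ w x)
    (hA : MeasurableSet A) : mcSampleLaw μ ι w A ≤ Fintype.card ι * μ.real A := by
  have hint (i : ι) : Integrable (fun ω : ι → α => A.indicator 1 (ω i)) (Measure.pi fun _ => μ) :=
    (integrable_const (1 : ℝ)).indicator (hA.preimage (measurable_pi_apply i))
  calc mcSampleLaw μ ι w A
      ≤ ∫ ω : ι → α, ∑ i, A.indicator 1 (ω i) ∂Measure.pi fun _ => μ :=
        integral_mono_of_nonneg (.of_forall fun _ => sum_weight_mul_indicator_nonneg hw)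
          (integrable_finsetSum _ fun i _ => hint i)
          (.of_forall fun _ => sum_weight_mul_indicator_le_sum_indicator hw)
    _ = ∑ i : ι, ∫ x, A.indicator 1 x ∂μ := by
        rw [integral_finsetSum _ fun i _ => hint i]
        exact Finset.sum_congr rfl fun i _ =>
          integral_comp_eval (μ := fun _ => μ) (aestronglyMeasurable_const.indicator hA)
    _ = Fintype.card ι * μ.real A := by simp [integral_indicator_one hA]

end MonteCarlo

theorem rpow_neg_one_div_pow {x : ℝ} (hx : 0 ≤ x) {d : ℕ} (hd : d ≠ 0) :
    (x ^ (-(1 : ℝ) / d)) ^ d = x⁻¹ := by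
  rw [neg_div, rpow_neg hx, ← inv_rpow hx, one_div, rpow_inv_natCast_pow (inv_nonneg.mpr hx) hd]

theorem log_four_mul_le_div_mul_rpow {d n : ℕ} (hd : 0 < d) (hn : 0 < n) {B : ℝ} (hB : 0 ≤ B)
    (hcond : 4 * d * log (4 * d) ≤ B * (n : ℝ) ^ (-(1 : ℝ) / d)) :
    log (4 * d) ≤ B / d * (4 * n : ℝ) ^ (-(1 : ℝ) / d) := by
  have h4d : (0 : ℝ) < 4 * d := by positivity
  have hquarter : (1 / 4 : ℝ) ≤ 4 ^ (-(1 : ℝ) / d) := by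
    rw [one_div, ← rpow_neg_one]
    refine rpow_le_rpow_of_exponent_le (by norm_num) ?_
    rw [neg_div, neg_le_neg_iff, div_le_one (by positivity)]
    exact_mod_cast hd
  calc log (4 * d) ≤ B * (n : ℝ) ^ (-(1 : ℝ) / d) / (4 * d) := by
        rw [le_div_iff₀ h4d]; linarith
    _ = B / d * (1 / 4 * (n : ℝ) ^ (-(1 : ℝ) / d)) := by field_simp
    _ ≤ B / d * (4 ^ (-(1 : ℝ) / d) * (n : ℝ) ^ (-(1 : ℝ) / d)) := by gcongr
    _ = B / d * (4 * n : ℝ) ^ (-(1 : ℝ) / d) := by rw [mul_rpow (by norm_num) (by positivity)]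

theorem bddAbove_range_abs_toReal_sub {α : Type*} [MeasurableSpace α] (P : Measure α)
    [IsProbabilityMeasure P] {Q : Set α → ℝ} (hQ₀ : ∀ A, 0 ≤ Q A) (hQ₁ : ∀ A, Q A ≤ 1) :
    BddAbove (Set.range fun A : {A : Set α // MeasurableSet A} => |(P A.1).toReal - Q A.1|) :=
  ⟨1, by
    rintro _ ⟨A, rfl⟩
    exact abs_sub_le_of_nonneg_of_le ENNReal.toReal_nonneg measureReal_le_one (hQ₀ _) (hQ₁ _)⟩

/-- Theorem 4.6, lower bound for Monte Carlo sampling.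
Let `f(x) = −(B/d)(x_1 + ⋯ + x_d)` on `X = [0,1]^d`, and let `P̃_f` be the law of the
Monte Carlo sample `X_I` from `n` i.i.d. uniform points, i.e.
`P̃_f(A) = E[∑_i (e^{f(X_i)} / ∑_j e^{f(X_j)}) 1_A(X_i)]`.
If `B n^{−1/d} ≥ 4 d log(4d)`, then `D_TV(P_f, P̃_f) ≥ 1/2`. -/
theorem mc_sampling_lower_bound (d n : ℕ) (hd : 1 ≤ d) (hn : 1 ≤ n) (B : ℝ) (hB : 0 < B)
    (f : (Fin d → ℝ) → ℝ) (hf : ∀ x, f x = -(B / d) * ∑ i, x i)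
    (Pt : Set (Fin d → ℝ) → ℝ)
    (hPt : ∀ A : Set (Fin d → ℝ), Pt A =
      ∫ ω : Fin n → (Fin d → ℝ),
        (∑ i, Real.exp (f (ω i)) / (∑ j, Real.exp (f (ω j))) * A.indicator 1 (ω i))
        ∂(Measure.pi fun _ => volume.restrict (cube d)))
    (hcond : 4 * d * Real.log (4 * d) ≤ B * (n : ℝ) ^ (-(1 : ℝ) / d)) :
    (1 : ℝ) / 2 ≤
      ⨆ A : {A : Set (Fin d → ℝ) // MeasurableSet A}, |(gibbs f A.1).toReal - Pt A.1| := by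
  obtain rfl : f = fun x => -(B / d) * ∑ i, x i := funext hf
  have hn₁ : (1 : ℝ) ≤ n := by exact_mod_cast hn
  set t : ℝ := (4 * n : ℝ) ^ (-(1 : ℝ) / d)
  have ht₀ : 0 ≤ t := by positivity
  have ht₁ : t ≤ 1 := rpow_le_one_of_one_le_of_nonpos (by linarith)
    (div_nonpos_of_nonpos_of_nonneg (by norm_num) (Nat.cast_nonneg d))
  set A := Set.Icc (0 : Fin d → ℝ) fun _ => t
  set P := gibbs fun x : Fin d → ℝ => -(B / d) * ∑ i, x i
  have hgibbs : 3 / 4 ≤ (P A).toReal :=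
    three_quarters_le_gibbs_Icc_of_linear hd (by positivity) ht₀ ht₁
      (log_four_mul_le_div_mul_rpow hd hn hB.le hcond)
  have hweights : ∀ x : Fin d → ℝ, 0 ≤ exp (-(B / d) * ∑ i, x i) := fun x => (exp_pos _).le
  have hsample : Pt A ≤ 1 / 4 :=
    calc Pt A ≤ Fintype.card (Fin n) * (volume.restrict (cube d)).real A :=
          (hPt A).trans_le (mcSampleLaw_le_card_mul _ _ hweights measurableSet_Icc)
      _ = n * t ^ d := by rw [Fintype.card_fin, measureReal_restrict_cube_Icc ht₀ ht₁]
      _ = 1 / 4 := by rw [rpow_neg_one_div_pow (by positivity) (by omega)]; field_simp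
  have : IsProbabilityMeasure P := isProbabilityMeasure_gibbs (integrableOn_cube_exp (by fun_prop))
  have hbdd := bddAbove_range_abs_toReal_sub P
    (fun A => (hPt A).trans_ge (mcSampleLaw_nonneg _ _ hweights))
    (fun A => (hPt A).trans_le (mcSampleLaw_le_one _ _ hweights))
  refine le_ciSup_of_le hbdd ⟨A, measurableSet_Icc⟩ ?_
  exact (by linarith : (1 : ℝ) / 2 ≤ (P A).toReal - Pt A).trans (le_abs_self _)
end
end

section
/- Let d ≥ 1, N ≥ 1, n = N^d, β ∈ ℝ, and let f : [0,1]^d → ℝ, f(x) = β·(x_1 + ⋯ + x_d). Partition X = [0,1]^d into the n axis-aligned subcubes of side length 1/N obtained by dividing each coordinate interval into N equal parts, and let g_n : X → ℝ be the piecewise constant function that on each subcube equals the value of f at the center of that subcube. Then L_f − L_{g_n} = d · r(β/N), where r(t) := log( ∫_{−1/2}^{1/2} exp(t·u) du ). -/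
/-!
Both `exp ∘ f` and `exp ∘ g_n` are products of one-variable factors, so
`L_f - L_{g_n} = d (log A - log B)` with `A = ∫₀¹ e^{βt} dt` and `B = ∫₀¹ e^{β c(t)} dt`, where
`c(t)` is the centre of the cell of side `1/N` containing `t`. Substituting `t = c_k + u/N` on
the `k`-th cell shows that it contributes `e^{β c_k}/N · ∫_{-1/2}^{1/2} e^{(β/N) u} du` to `A`
and `e^{β c_k}/N` to `B`, hence `A = B · e^{r(β/N)}`.
-/

open MeasureTheory Real

noncomputable section

/-- `r(t) = log(∫_{−1/2}^{1/2} e^{tu} du)`. -/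
def rFun (t : ℝ) : ℝ := Real.log (∫ u in Set.Icc (-(1 : ℝ) / 2) (1 / 2), Real.exp (t * u))

theorem setIntegral_Icc_pi_prod {ι : Type*} [Fintype ι] (a b : ι → ℝ) (F : ι → ℝ → ℝ) :
    ∫ x in Set.Icc a b, ∏ i, F i (x i) = ∏ i, ∫ t in Set.Icc (a i) (b i), F i t := by
  rw [← Set.pi_univ_Icc, volume_pi, Measure.restrict_pi_pi, integral_fintype_prod_eq_prod]

theorem logPart_eq_of_forall_eq_sum {d : ℕ} {f : (Fin d → ℝ) → ℝ} (φ : ℝ → ℝ)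
    (hf : ∀ x, f x = ∑ i, φ (x i)) :
    logPart f = d * Real.log (∫ t in Set.Icc (0 : ℝ) 1, Real.exp (φ t)) := by
  have hexp : ∀ x, Real.exp (f x) = ∏ i, Real.exp (φ (x i)) := fun x => by
    rw [hf, Real.exp_sum]
  rw [logPart, partZ, cube, funext hexp, setIntegral_Icc_pi_prod 0 1 fun _ t => Real.exp (φ t)]
  simp only [Pi.zero_apply, Pi.one_apply, Finset.prod_const, Finset.card_univ, Fintype.card_fin,
    Real.log_pow]

theorem integral_eq_of_eqOn_Ioo {f : ℝ → ℝ} {a b c : ℝ} (hab : a ≤ b)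
    (h : Set.EqOn f (fun _ => c) (Set.Ioo a b)) :
    ∫ x in a..b, f x = (b - a) * c := by
  rw [intervalIntegral.integral_of_le hab, integral_Ioc_eq_integral_Ioo,
    setIntegral_congr_fun measurableSet_Ioo h, setIntegral_const, Real.volume_real_Ioo_of_le hab,
    smul_eq_mul]

theorem intervalIntegrable_of_eqOn_Ioo {f : ℝ → ℝ} {a b c : ℝ} (hab : a ≤ b)
    (h : Set.EqOn f (fun _ => c) (Set.Ioo a b)) :
    IntervalIntegrable f volume a b :=
  (intervalIntegrable_iff_integrableOn_Ioo_of_le hab).2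
    ((integrableOn_const measure_Ioo_lt_top.ne).congr_fun h.symm measurableSet_Ioo)

theorem setIntegral_Icc_zero_one_eq_sum {N : ℕ} (hN : 1 ≤ N) {F : ℝ → ℝ}
    (hF : ∀ k < N, IntervalIntegrable F volume (k / N) ((k + 1) / N)) :
    ∫ t in Set.Icc (0 : ℝ) 1, F t = ∑ k ∈ Finset.range N, ∫ t in (k / N : ℝ)..(k + 1) / N, F t := by
  have hN0 : (N : ℝ) ≠ 0 := by positivity
  have h := intervalIntegral.sum_integral_adjacent_intervals (a := fun k : ℕ => (k / N : ℝ))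
    (f := F) (μ := volume) (n := N) (by simpa only [Nat.cast_succ] using hF)
  simp only [Nat.cast_succ, Nat.cast_zero, zero_div, div_self hN0] at h
  rw [h, intervalIntegral.integral_of_le zero_le_one, integral_Icc_eq_integral_Ioc]

theorem integral_exp_mul_centered (β c h : ℝ) (hh : h ≠ 0) :
    ∫ t in (c - h / 2)..(c + h / 2), Real.exp (β * t)
      = h * Real.exp (β * c) * ∫ u in (-1 / 2 : ℝ)..(1 / 2), Real.exp (β * h * u) := by
  have hsub := intervalIntegral.integral_comp_mul_add (fun t => Real.exp (β * t)) hh c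
    (a := -1 / 2) (b := 1 / 2)
  have hsplit : ∀ u, Real.exp (β * (h * u + c)) = Real.exp (β * h * u) * Real.exp (β * c) :=
    fun u => by rw [← Real.exp_add]; ring_nf
  simp only [hsplit, intervalIntegral.integral_mul_const, smul_eq_mul] at hsub
  rw [eq_inv_mul_iff_mul_eq₀ hh] at hsub
  rw [show c - h / 2 = h * (-1 / 2) + c by ring, show c + h / 2 = h * (1 / 2) + c by ring, ← hsub]
  ring

/-- The centre of the cell `[k/N, (k+1)/N)` containing `t`; the `min` puts `t = 1` into the
last cell. -/
def cellCenter (N : ℕ) (t : ℝ) : ℝ := (((min ⌊(N : ℝ) * t⌋₊ (N - 1) : ℕ) : ℝ) + 1 / 2) / N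

theorem cellCenter_eq_of_mem_Ico {N k : ℕ} (hk : k < N) {t : ℝ}
    (ht : t ∈ Set.Ico ((k : ℝ) / N) ((k + 1) / N)) :
    cellCenter N t = (k + 1 / 2) / N := by
  have hN0 : (0 : ℝ) < N := by exact_mod_cast (Nat.zero_le k).trans_lt hk
  obtain ⟨h₁, h₂⟩ := ht
  rw [div_le_iff₀' hN0] at h₁
  rw [lt_div_iff₀' hN0] at h₂
  have hfloor : ⌊(N : ℝ) * t⌋₊ = k := (Nat.floor_eq_iff ((Nat.cast_nonneg k).trans h₁)).2 ⟨h₁, h₂⟩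
  rw [cellCenter, hfloor, min_eq_left (by omega)]

theorem setIntegral_comp_cellCenter {N : ℕ} (hN : 1 ≤ N) (G : ℝ → ℝ) :
    ∫ t in Set.Icc (0 : ℝ) 1, G (cellCenter N t)
      = ∑ k ∈ Finset.range N, G ((k + 1 / 2) / N) / N := by
  have hcell : ∀ k < N, Set.EqOn (fun t => G (cellCenter N t)) (fun _ => G ((k + 1 / 2) / N))
      (Set.Ioo ((k : ℝ) / N) ((k + 1) / N)) := fun k hk t ht => by
    simp only [cellCenter_eq_of_mem_Ico hk (Set.Ioo_subset_Ico_self ht)]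
  have hle : ∀ k : ℕ, (k : ℝ) / N ≤ (k + 1) / N := fun k => by gcongr; linarith
  rw [setIntegral_Icc_zero_one_eq_sum hN fun k hk =>
    intervalIntegrable_of_eqOn_Ioo (hle k) (hcell k hk)]
  refine Finset.sum_congr rfl fun k hk => ?_
  rw [integral_eq_of_eqOn_Ioo (hle k) (hcell k (Finset.mem_range.1 hk))]
  field_simp
  ring

theorem setIntegral_exp_mul_eq_sum {N : ℕ} (hN : 1 ≤ N) (β : ℝ) :
    ∫ t in Set.Icc (0 : ℝ) 1, Real.exp (β * t)
      = (∑ k ∈ Finset.range N, Real.exp (β * ((k + 1 / 2) / N)) / N)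
        * ∫ u in (-1 / 2 : ℝ)..(1 / 2), Real.exp (β / N * u) := by
  have hN0 : (N : ℝ) ≠ 0 := by positivity
  rw [setIntegral_Icc_zero_one_eq_sum hN fun k _ =>
    (by fun_prop : Continuous _).intervalIntegrable _ _, Finset.sum_mul]
  refine Finset.sum_congr rfl fun k _ => ?_
  rw [show (k : ℝ) / N = (k + 1 / 2) / N - 1 / N / 2 by ring,
    show ((k : ℝ) + 1) / N = (k + 1 / 2) / N + 1 / N / 2 by ring,
    integral_exp_mul_centered _ _ _ (one_div_ne_zero hN0)]
  ring_nf

theorem rFun_eq_log_intervalIntegral (t : ℝ) :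
    rFun t = Real.log (∫ u in (-1 / 2 : ℝ)..(1 / 2), Real.exp (t * u)) := by
  rw [rFun, integral_Icc_eq_integral_Ioc, intervalIntegral.integral_of_le (by norm_num)]

theorem intervalIntegral_exp_mul_pos (t : ℝ) :
    0 < ∫ u in (-1 / 2 : ℝ)..(1 / 2), Real.exp (t * u) :=
  intervalIntegral.intervalIntegral_pos_of_pos_on
    ((by fun_prop : Continuous fun u => Real.exp (t * u)).intervalIntegrable _ _)
    (fun u _ => Real.exp_pos _) (by norm_num)

theorem pc_approx_linear_logpart_error_general (d N : ℕ) (hN : 1 ≤ N) (β : ℝ)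
    (f gn : (Fin d → ℝ) → ℝ)
    (hf : ∀ x, f x = β * ∑ i, x i)
    (hg : ∀ x, gn x = β * ∑ i,
      (((min ⌊(N : ℝ) * x i⌋₊ (N - 1) : ℕ) : ℝ) + 1 / 2) / (N : ℝ)) :
    logPart f - logPart gn = (d : ℝ) * rFun (β / N) := by
  have hLf := logPart_eq_of_forall_eq_sum (f := f) (fun t => β * t) fun x => by
    rw [hf, Finset.mul_sum]
  have hLg := logPart_eq_of_forall_eq_sum (f := gn) (fun t => β * cellCenter N t) fun x => by
    rw [hg, Finset.mul_sum]; rfl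
  have hS : 0 < ∑ k ∈ Finset.range N, Real.exp (β * ((k + 1 / 2) / N)) / N :=
    Finset.sum_pos (fun k _ => by positivity) ⟨0, Finset.mem_range.2 hN⟩
  rw [hLf, hLg, setIntegral_exp_mul_eq_sum hN,
    setIntegral_comp_cellCenter hN fun s => Real.exp (β * s),
    Real.log_mul hS.ne' (intervalIntegral_exp_mul_pos _).ne', rFun_eq_log_intervalIntegral]
  ring

/-- log-partition error of piecewise constant approximation for linear `f`.
With `n = N^d`, `f(x) = β (x_1 + ⋯ + x_d)`, and `g_n` the piecewise constant interpolation of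
`f` at the centers of the `n` subcubes of side `1/N` (boundary points assigned via floor),
`L_f − L_{g_n} = d · r(β/N)`. -/
theorem pc_approx_linear_logpart_error (d N : ℕ) (hd : 1 ≤ d) (hN : 1 ≤ N) (β : ℝ)
    (f gn : (Fin d → ℝ) → ℝ)
    (hf : ∀ x, f x = β * ∑ i, x i)
    (hg : ∀ x, gn x = β * ∑ i,
      (((min ⌊(N : ℝ) * x i⌋₊ (N - 1) : ℕ) : ℝ) + 1 / 2) / (N : ℝ)) :
    logPart f - logPart gn = (d : ℝ) * rFun (β / N) :=
  pc_approx_linear_logpart_error_general d N hN β f gn hf hg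
end
end

section
/- Let r : ℝ → ℝ, r(t) := log( ∫_{−1/2}^{1/2} exp(t·u) du ). Then there exist constants c, C > 0 such that c·min{|t|, |t|²} ≤ r(t) ≤ C·min{|t|, |t|²} for all t ∈ ℝ. -/
open MeasureTheory Real

noncomputable section

lemma integral_eval (t : ℝ) (ht : t ≠ 0) :
    (∫ u in Set.Icc (-(1 : ℝ) / 2) (1 / 2), Real.exp (t * u))
      = Real.sinh (|t| / 2) / (|t| / 2) := by
  have habs : Real.sinh (|t| / 2) / (|t| / 2) = Real.sinh (t / 2) / (t / 2) := by
    rcases abs_choice t with h | h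
    · rw [h]
    · rw [h]
      rw [show -t/2 = -(t/2) by ring, Real.sinh_neg, neg_div_neg_eq]
  rw [MeasureTheory.integral_Icc_eq_integral_Ioc,
    ← intervalIntegral.integral_of_le (by norm_num : (-(1:ℝ)/2) ≤ 1/2),
    intervalIntegral.integral_comp_mul_left (fun x => Real.exp x) ht,
    integral_exp, smul_eq_mul, habs, Real.sinh_eq,
    show t * (1/2) = t/2 by ring, show t * (-1/2) = -(t/2) by ring,
    div_div, show (2 * (t/2) : ℝ) = t by ring, inv_mul_eq_div]

lemma rFun_zero : rFun 0 = 0 := by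
  unfold rFun
  simp only [zero_mul, Real.exp_zero]
  rw [MeasureTheory.setIntegral_const]
  simp [Real.volume_Icc]
  norm_num

-- cosh z ≥ 1 + z²/8 for z ≥ 0
lemma cosh_lower {z : ℝ} (hz : 0 ≤ z) : 1 + z ^ 2 / 8 ≤ Real.cosh z := by
  have h1 : z / 2 + 1 ≤ Real.exp (z / 2) := Real.add_one_le_exp _
  have h2 : -z + 1 ≤ Real.exp (-z) := Real.add_one_le_exp _
  have h3 : (z / 2 + 1) * (z / 2 + 1) ≤ Real.exp (z / 2) * Real.exp (z / 2) :=
    mul_le_mul h1 h1 (by linarith) (le_of_lt (Real.exp_pos _))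
  rw [← Real.exp_add] at h3
  have h4 : z / 2 + z / 2 = z := by ring
  rw [h4] at h3
  rw [Real.cosh_eq]
  nlinarith

-- sinh x / x ≥ cosh (x/2) for x > 0
lemma sinh_div_lower {x : ℝ} (hx : 0 < x) : Real.cosh (x / 2) ≤ Real.sinh x / x := by
  have h1 : Real.sinh x = 2 * Real.sinh (x / 2) * Real.cosh (x / 2) := by
    rw [← Real.sinh_two_mul]; congr 1; ring
  have h2 : x / 2 ≤ Real.sinh (x / 2) := Real.self_le_sinh_iff.mpr (by linarith)
  have h3 : (0 : ℝ) < Real.cosh (x / 2) := Real.cosh_pos _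
  rw [le_div_iff₀ hx, h1]
  nlinarith

-- sinh x ≤ x * exp x for x > 0
lemma sinh_upper {x : ℝ} (hx : 0 < x) : Real.sinh x ≤ x * Real.exp x := by
  have h1 : -(2 * x) + 1 ≤ Real.exp (-(2 * x)) := Real.add_one_le_exp _
  have h2 : Real.exp (-(2 * x)) * Real.exp x = Real.exp (-x) := by
    rw [← Real.exp_add]; ring_nf
  have h3 : (0 : ℝ) < Real.exp x := Real.exp_pos _
  rw [Real.sinh_eq]
  nlinarith [mul_le_mul_of_nonneg_right h1 h3.le]

-- sinh x ≤ x + (2/9) x³ for 0 ≤ x ≤ 1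
lemma sinh_upper_small {x : ℝ} (hx : 0 ≤ x) (hx1 : x ≤ 1) :
    Real.sinh x ≤ x + 2 / 9 * x ^ 3 := by
  have hb1 := Real.exp_bound (x := x) (by rw [abs_of_nonneg hx]; exact hx1) (n := 3) (by norm_num)
  have hb2 := Real.exp_bound (x := -x) (by rw [abs_neg, abs_of_nonneg hx]; exact hx1)
    (n := 3) (by norm_num)
  rw [show (3 : ℕ).succ = 4 by rfl] at hb1 hb2
  simp only [Finset.sum_range_succ, Finset.sum_range_zero] at hb1 hb2
  rw [abs_of_nonneg hx] at hb1
  rw [abs_neg, abs_of_nonneg hx] at hb2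
  norm_num [Nat.factorial] at hb1 hb2
  rw [abs_le] at hb1 hb2
  rw [Real.sinh_eq]
  nlinarith [hb1.1, hb1.2, hb2.1, hb2.2]

-- log (4x) ≤ x/2 for x ≥ 64
lemma log_small {x : ℝ} (hx : 64 ≤ x) : Real.log (4 * x) ≤ x / 2 := by
  have hx0 : (0 : ℝ) < x := by linarith
  have h4x : (0 : ℝ) < 4 * x := by linarith
  have h1 : Real.log (4 * x) = 2 * Real.log (Real.sqrt (4 * x)) := by
    rw [Real.log_sqrt h4x.le]; ring
  have h2 : Real.log (Real.sqrt (4 * x)) ≤ Real.sqrt (4 * x) - 1 :=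
    Real.log_le_sub_one_of_pos (Real.sqrt_pos.mpr h4x)
  have h3 : Real.sqrt (4 * x) ≤ Real.sqrt x * 2 := by
    rw [show (4 : ℝ) * x = (Real.sqrt x * 2) ^ 2 by rw [mul_pow, Real.sq_sqrt hx0.le]; ring]
    rw [Real.sqrt_sq (by positivity)]
  have h5 : Real.sqrt x * Real.sqrt x = x := Real.mul_self_sqrt hx0.le
  have h6 : (8 : ℝ) ≤ Real.sqrt x := by
    nlinarith [Real.sqrt_nonneg x]
  nlinarith [Real.sqrt_nonneg x]

-- r lower bound, moderate x
lemma rlog_lower_mid {x : ℝ} (hx : 0 < x) (hx64 : x ≤ 64) :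
    x ^ 2 / 4128 ≤ Real.log (Real.sinh x / x) := by
  have h1 : 1 + x ^ 2 / 32 ≤ Real.sinh x / x := by
    have := cosh_lower (z := x / 2) (by linarith)
    have h2 := sinh_div_lower hx
    nlinarith
  have hpos : (0 : ℝ) < Real.sinh x / x := by linarith [sq_nonneg x]
  have h3 : 1 - (Real.sinh x / x)⁻¹ ≤ Real.log (Real.sinh x / x) :=
    Real.one_sub_inv_le_log_of_pos hpos
  have h4 : (Real.sinh x / x)⁻¹ ≤ (1 + x ^ 2 / 32)⁻¹ := by
    apply inv_anti₀ (by positivity) h1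
  have h5 : (1 + x ^ 2 / 32)⁻¹ ≤ 1 - x ^ 2 / 4128 := by
    rw [inv_le_iff_one_le_mul₀ (by positivity)]
    have hx2 : x ^ 2 ≤ 4096 := by nlinarith
    nlinarith [sq_nonneg x, mul_nonneg (sq_nonneg x) (sub_nonneg.mpr hx2)]
  linarith

-- r lower bound, large x
lemma rlog_lower_big {x : ℝ} (hx : 64 ≤ x) : x / 2 ≤ Real.log (Real.sinh x / x) := by
  have hx0 : (0 : ℝ) < x := by linarith
  have h1 : Real.exp x / (4 * x) ≤ Real.sinh x / x := by
    rw [div_le_div_iff₀ (by positivity) hx0, Real.sinh_eq]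
    have h2 : x + 1 ≤ Real.exp x := Real.add_one_le_exp x
    have h3 : 0 < Real.exp (-x) := Real.exp_pos _
    have h4 : Real.exp (-x) ≤ 1 := Real.exp_le_one_iff.mpr (by linarith)
    nlinarith
  have hpos : (0 : ℝ) < Real.exp x / (4 * x) := by positivity
  have h5 := Real.log_le_log hpos h1
  rw [Real.log_div (Real.exp_ne_zero x) (by positivity), Real.log_exp] at h5
  have h6 := log_small hx
  linarith

/-- Lemma D.4: there exist constants `c, C > 0` such that
`c min{|t|, |t|²} ≤ r(t) ≤ C min{|t|, |t|²}` for all `t ∈ ℝ`. -/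
theorem rFun_two_sided_bounds :
    ∃ c C : ℝ, 0 < c ∧ 0 < C ∧
      ∀ t : ℝ, c * min |t| (|t| ^ 2) ≤ rFun t ∧ rFun t ≤ C * min |t| (|t| ^ 2) := by
  refine ⟨1/16512, 1/2, by norm_num, by norm_num, fun t => ?_⟩
  by_cases ht : t = 0
  · subst ht; simp [rFun_zero]
  · have habs : 0 < |t| := abs_pos.mpr ht
    have hd : rFun t = Real.log (Real.sinh (|t| / 2) / (|t| / 2)) := by
      unfold rFun; rw [integral_eval t ht]
    set x := |t| / 2 with hxdef
    have hx : 0 < x := by positivity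
    have ht2 : |t| = 2 * x := by rw [hxdef]; ring
    have hsinh : 0 < Real.sinh x := Real.sinh_pos_iff.mpr hx
    have hpos : 0 < Real.sinh x / x := div_pos hsinh hx
    constructor
    · -- lower bound
      rcases le_or_gt x 64 with h64 | h64
      · have hl := rlog_lower_mid hx h64
        rw [hd]
        have hmin : min |t| (|t| ^ 2) ≤ |t| ^ 2 := min_le_right _ _
        have : (1/16512 : ℝ) * min |t| (|t| ^ 2) ≤ 1/16512 * |t| ^ 2 := by linarith
        calc (1/16512 : ℝ) * min |t| (|t| ^ 2) ≤ 1/16512 * |t| ^ 2 := this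
          _ = x ^ 2 / 4128 := by rw [ht2]; ring
          _ ≤ _ := hl
      · have hl := rlog_lower_big h64.le
        rw [hd]
        have hmin : min |t| (|t| ^ 2) ≤ |t| := min_le_left _ _
        calc (1/16512 : ℝ) * min |t| (|t| ^ 2) ≤ 1/16512 * |t| := by linarith
          _ = x / 8256 := by rw [ht2]; ring
          _ ≤ x / 2 := by linarith
          _ ≤ _ := hl
    · -- upper bound
      rcases le_or_gt x (1/2) with h1 | h1
      · -- |t| ≤ 1, min = |t|²
        have hmin : min |t| (|t| ^ 2) = |t| ^ 2 := by
          apply min_eq_right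
          nlinarith
        have hs := sinh_upper_small hx.le (by linarith)
        have hup : Real.sinh x / x ≤ 1 + 2/9 * x ^ 2 := by
          rw [div_le_iff₀ hx]
          nlinarith
        have hlog : Real.log (Real.sinh x / x) ≤ 2/9 * x ^ 2 := by
          have := Real.log_le_sub_one_of_pos hpos
          linarith
        rw [hd, hmin]
        calc Real.log (Real.sinh x / x) ≤ 2/9 * x ^ 2 := hlog
          _ ≤ 1/2 * (2 * x) ^ 2 := by nlinarith
          _ = 1/2 * |t| ^ 2 := by rw [ht2]
      · -- |t| > 1, min = |t|
        have hmin : min |t| (|t| ^ 2) = |t| := by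
          apply min_eq_left
          nlinarith
        have hs := sinh_upper hx
        have hup : Real.sinh x / x ≤ Real.exp x := by
          rw [div_le_iff₀ hx]
          nlinarith
        have hlog : Real.log (Real.sinh x / x) ≤ x :=
          (Real.log_le_iff_le_exp hpos).mpr hup
        rw [hd, hmin, ht2]
        linarith
end
end

section
/- Let d ≥ 1, m ≥ 0, X = [0,1]^d, and let f ∈ C^m(X). Then ‖exp(f)‖_{C^m} ≤ 2^{m(m−1)/2} · max{1, ‖f‖_{C^m}}^m · ‖exp(f)‖_∞, where exp(f) denotes the function x ↦ e^{f(x)}. -/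
/-!
Write `∂_L` for the derivative along a word `L` of coordinate directions. By induction on `L`,
`∂_L e^f = P_L e^f` with `P_{iL} = P_L ∂_i f + ∂_i P_L`, so `P_L` is a sum of products
`∏_B ∂_B f` over subwords `B`, each with at most `|L|` factors. Since mixed partials commute,
every `∂_B f` is some `∂^β f` with `|β| = |B|`, hence bounded by `‖f‖_{C^m}` on the cube.
Passing from `L` to `iL` multiplies the number of products by at most `|L| + 1 ≤ 2^{|L|}`,
so there are at most `2^{|L|(|L|-1)/2}` of them.
-/

open MeasureTheory Real

noncomputable section

/-- Partial derivative of `h` in coordinate direction `i`. -/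
def pderivCoord {d : ℕ} (i : Fin d) (h : (Fin d → ℝ) → ℝ) : (Fin d → ℝ) → ℝ :=
  fun x => deriv (fun t => h (Function.update x i t)) (x i)

/-- Mixed partial derivative `∂^α h` for a multi-index `α ∈ ℕ₀^d`. -/
def pderivMulti {d : ℕ} (α : Fin d → ℕ) (h : (Fin d → ℝ) → ℝ) : (Fin d → ℝ) → ℝ :=
  (List.finRange d).foldr (fun i acc => (pderivCoord i)^[α i] acc) h

/-- The `C^m` norm on the cube:
`‖h‖_{C^m} = sup_{α : |α|₁ ≤ m} sup_{x ∈ [0,1]^d} |∂^α h(x)|`. -/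
def CmNorm {d : ℕ} (m : ℕ) (h : (Fin d → ℝ) → ℝ) : ℝ :=
  ⨆ α : {α : Fin d → ℕ // ∑ i, α i ≤ m}, ⨆ x : cube d, |pderivMulti α.1 h x.1|

section abs

variable {R : Type*} [Ring R] [LinearOrder R] [IsStrictOrderedRing R] {l : List R} {C : R}

theorem List.abs_sum_le_length_mul (h : ∀ a ∈ l, |a| ≤ C) : |l.sum| ≤ l.length * C := by
  induction l with
  | nil => simp
  | cons a l ih =>
    simp only [List.mem_cons, forall_eq_or_imp] at h
    calc |(a :: l).sum| ≤ |a| + |l.sum| := abs_add_le _ _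
      _ ≤ C + l.length * C := add_le_add h.1 (ih h.2)
      _ = (a :: l).length * C := by
        rw [List.length_cons, Nat.cast_succ, add_mul, one_mul, add_comm]

theorem List.abs_prod_le_pow_length (h : ∀ a ∈ l, |a| ≤ C) : |l.prod| ≤ C ^ l.length := by
  induction l with
  | nil => simp
  | cons a l ih =>
    simp only [List.mem_cons, forall_eq_or_imp] at h
    rw [List.prod_cons, abs_mul, List.length_cons, pow_succ']
    exact mul_le_mul h.1 (ih h.2) (abs_nonneg _) ((abs_nonneg a).trans h.1)

end abs

variable {d : ℕ}

def coordDeriv (i : Fin d) (h : (Fin d → ℝ) → ℝ) : (Fin d → ℝ) → ℝ :=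
  fun x => fderiv ℝ h x (Pi.single i 1)

def listDeriv (L : List (Fin d)) (h : (Fin d → ℝ) → ℝ) : (Fin d → ℝ) → ℝ :=
  L.foldr coordDeriv h

@[simp]
theorem listDeriv_nil (h : (Fin d → ℝ) → ℝ) : listDeriv [] h = h := rfl

@[simp]
theorem listDeriv_cons (i : Fin d) (L : List (Fin d)) (h : (Fin d → ℝ) → ℝ) :
    listDeriv (i :: L) h = coordDeriv i (listDeriv L h) := rfl

section coordDeriv

variable {i j : Fin d} {u v h : (Fin d → ℝ) → ℝ}

theorem pderivCoord_eq_coordDeriv (hh : Differentiable ℝ h) :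
    pderivCoord i h = coordDeriv i h := by
  funext x
  have hline := (hh (Function.update x i (x i))).hasFDerivAt.comp_hasDerivAt (x i)
    (hasDerivAt_update x i (x i))
  rw [Function.update_eq_self] at hline
  exact hline.deriv

theorem contDiff_coordDeriv {n : ℕ} (hh : ContDiff ℝ (n + 1 : ℕ) h) :
    ContDiff ℝ n (coordDeriv i h) :=
  (ContinuousLinearMap.apply ℝ ℝ (Pi.single i 1)).contDiff.comp
    (hh.fderiv_right (by exact_mod_cast le_rfl))

theorem contDiff_listDeriv {n k : ℕ} (hh : ContDiff ℝ n h) (L : List (Fin d))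
    (hL : L.length + k ≤ n) : ContDiff ℝ k (listDeriv L h) := by
  induction L generalizing k with
  | nil => exact hh.of_le (by exact_mod_cast (by simpa using hL))
  | cons i L ih => exact contDiff_coordDeriv (ih (by simp at hL; omega))

theorem differentiable_listDeriv {n : ℕ} (hh : ContDiff ℝ n h) {L : List (Fin d)}
    (hL : L.length < n) : Differentiable ℝ (listDeriv L h) :=
  (contDiff_listDeriv hh L (k := 1) hL).differentiable one_ne_zero

theorem coordDeriv_coordDeriv_apply (hh : ContDiff ℝ 2 h) (x : Fin d → ℝ) :
    coordDeriv i (coordDeriv j h) x =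
      fderiv ℝ (fderiv ℝ h) x (Pi.single i 1) (Pi.single j 1) := by
  have hd : DifferentiableAt ℝ (fderiv ℝ h) x :=
    (hh.fderiv_right (m := 1) le_rfl).differentiable one_ne_zero x
  have hcomp :=
    (ContinuousLinearMap.apply ℝ ℝ (Pi.single j 1)).hasFDerivAt.comp x hd.hasFDerivAt
  exact congrArg (· (Pi.single i 1)) hcomp.fderiv

theorem coordDeriv_comm (hh : ContDiff ℝ 2 h) :
    coordDeriv i (coordDeriv j h) = coordDeriv j (coordDeriv i h) := by
  funext x
  rw [coordDeriv_coordDeriv_apply hh, coordDeriv_coordDeriv_apply hh,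
    (hh.contDiffAt.isSymmSndFDerivAt (by simp)).eq]

theorem listDeriv_perm {n : ℕ} (hh : ContDiff ℝ n h) {L L' : List (Fin d)} (hp : L.Perm L')
    (hL : L.length ≤ n) : listDeriv L h = listDeriv L' h := by
  induction hp with
  | nil => rfl
  | cons i _ ih => rw [listDeriv_cons, ih (by simp at hL; omega), listDeriv_cons]
  | swap i j L =>
    exact coordDeriv_comm
      (by exact_mod_cast contDiff_listDeriv hh L (k := 2) (by simp at hL; omega))
  | trans hp₁ _ ih₁ ih₂ => rw [ih₁ hL, ih₂ (hp₁.length_eq ▸ hL)]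

theorem coordDeriv_add (hu : Differentiable ℝ u) (hv : Differentiable ℝ v) :
    coordDeriv i (u + v) = coordDeriv i u + coordDeriv i v := by
  funext x
  simp [coordDeriv, fderiv_add (hu x) (hv x)]

theorem coordDeriv_mul (hu : Differentiable ℝ u) (hv : Differentiable ℝ v) :
    coordDeriv i (u * v) = coordDeriv i u * v + u * coordDeriv i v := by
  funext x
  simp only [coordDeriv, fderiv_mul (hu x) (hv x), add_apply,
    smul_apply, smul_eq_mul, Pi.add_apply, Pi.mul_apply]
  ring

theorem coordDeriv_exp (hh : Differentiable ℝ h) :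
    coordDeriv i (fun x => exp (h x)) = (fun x => exp (h x)) * coordDeriv i h := by
  funext x
  simp [coordDeriv, fderiv_exp (hh x)]

theorem differentiable_list_sum {𝕜 E F : Type*} [NontriviallyNormedField 𝕜]
    [NormedAddCommGroup E] [NormedSpace 𝕜 E] [NormedAddCommGroup F] [NormedSpace 𝕜 F]
    {l : List (E → F)} (hl : ∀ g ∈ l, Differentiable 𝕜 g) : Differentiable 𝕜 l.sum := by
  induction l with
  | nil => exact differentiable_const 0
  | cons g l ih =>
    simp only [List.mem_cons, forall_eq_or_imp] at hl
    exact hl.1.add (ih hl.2)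

theorem coordDeriv_list_sum {l : List ((Fin d → ℝ) → ℝ)} (hl : ∀ g ∈ l, Differentiable ℝ g) :
    coordDeriv i l.sum = (l.map (coordDeriv i)).sum := by
  induction l with
  | nil => funext x; simp [coordDeriv]
  | cons g l ih =>
    simp only [List.mem_cons, forall_eq_or_imp] at hl
    rw [List.sum_cons, coordDeriv_add hl.1 (differentiable_list_sum hl.2), ih hl.2,
      List.map_cons, List.sum_cons]

end coordDeriv

def derivProd (f : (Fin d → ℝ) → ℝ) (t : List (List (Fin d))) : (Fin d → ℝ) → ℝ :=
  (t.map (listDeriv · f)).prod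

/-- The product rule: `∂_i` hits one factor of `derivProd f t` at a time. -/
def leibnizTerms (i : Fin d) : List (List (Fin d)) → List (List (List (Fin d)))
  | [] => []
  | B :: t => ((i :: B) :: t) :: (leibnizTerms i t).map (B :: ·)

/-- The terms of `P_L` in `∂_L e^f = P_L e^f`, following `P_{iL} = P_L ∂_i f + ∂_i P_L`. -/
def expTerms : List (Fin d) → List (List (List (Fin d)))
  | [] => [[]]
  | i :: L => (expTerms L).map (· ++ [[i]]) ++ (expTerms L).flatMap (leibnizTerms i)

def expDerivPoly (f : (Fin d → ℝ) → ℝ) (L : List (Fin d)) : (Fin d → ℝ) → ℝ :=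
  ((expTerms L).map (derivProd f)).sum

section expTerms

variable {i : Fin d} {t t' : List (List (Fin d))}

theorem length_leibnizTerms (i : Fin d) (t : List (List (Fin d))) :
    (leibnizTerms i t).length = t.length := by
  induction t with
  | nil => rfl
  | cons B t ih => simp [leibnizTerms, ih]

theorem length_eq_of_mem_leibnizTerms (ht' : t' ∈ leibnizTerms i t) : t'.length = t.length := by
  induction t generalizing t' with
  | nil => simp [leibnizTerms] at ht'
  | cons B t ih =>
    simp only [leibnizTerms, List.mem_cons, List.mem_map] at ht'
    rcases ht' with rfl | ⟨t₀, ht₀, rfl⟩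
    · simp
    · simp [ih ht₀]

theorem block_length_le_of_mem_leibnizTerms {k : ℕ} (ht : ∀ B ∈ t, B.length ≤ k)
    (ht' : t' ∈ leibnizTerms i t) : ∀ B ∈ t', B.length ≤ k + 1 := by
  induction t generalizing t' with
  | nil => simp [leibnizTerms] at ht'
  | cons B t ih =>
    simp only [List.mem_cons, forall_eq_or_imp] at ht
    simp only [leibnizTerms, List.mem_cons, List.mem_map] at ht'
    rcases ht' with rfl | ⟨t₀, ht₀, rfl⟩
    · simp only [List.mem_cons, forall_eq_or_imp, List.length_cons]
      exact ⟨by omega, fun C hC => (ht.2 C hC).trans k.le_succ⟩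
    · simp only [List.mem_cons, forall_eq_or_imp]
      exact ⟨ht.1.trans k.le_succ, ih ht.2 ht₀⟩

theorem length_le_of_mem_expTerms {L : List (Fin d)} (ht : t ∈ expTerms L) :
    t.length ≤ L.length := by
  induction L generalizing t with
  | nil => simp_all [expTerms]
  | cons i L ih =>
    simp only [expTerms, List.mem_append, List.mem_map, List.mem_flatMap] at ht
    rcases ht with ⟨t₀, ht₀, rfl⟩ | ⟨t₀, ht₀, ht⟩
    · simpa using ih ht₀
    · rw [length_eq_of_mem_leibnizTerms ht]
      exact (ih ht₀).trans (Nat.le_succ _)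

theorem block_length_le_of_mem_expTerms {L : List (Fin d)} (ht : t ∈ expTerms L) :
    ∀ B ∈ t, B.length ≤ L.length := by
  induction L generalizing t with
  | nil => simp_all [expTerms]
  | cons i L ih =>
    simp only [expTerms, List.mem_append, List.mem_map, List.mem_flatMap] at ht
    rcases ht with ⟨t₀, ht₀, rfl⟩ | ⟨t₀, ht₀, ht⟩
    · intro B hB
      rcases List.mem_append.mp hB with hB | hB
      · exact (ih ht₀ B hB).trans (Nat.le_succ _)
      · simp [List.mem_singleton.mp hB]
    · exact block_length_le_of_mem_leibnizTerms (ih ht₀) ht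

theorem length_expTerms_cons_le (i : Fin d) (L : List (Fin d)) :
    (expTerms (i :: L)).length ≤ (expTerms L).length * (L.length + 1) := by
  have hsum : ((expTerms L).map fun t => (leibnizTerms i t).length).sum ≤
      (expTerms L).length * L.length := by
    refine (List.sum_le_card_nsmul _ L.length ?_).trans_eq (by simp)
    simp only [List.mem_map]
    rintro _ ⟨t, ht, rfl⟩
    rw [length_leibnizTerms]
    exact length_le_of_mem_expTerms ht
  simp only [expTerms, List.length_append, List.length_map, List.length_flatMap]
  linarith

theorem length_expTerms_le (L : List (Fin d)) :
    (expTerms L).length ≤ 2 ^ (L.length * (L.length - 1) / 2) := by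
  induction L with
  | nil => simp [expTerms]
  | cons i L ih =>
    calc (expTerms (i :: L)).length ≤ (expTerms L).length * (L.length + 1) :=
          length_expTerms_cons_le i L
      _ ≤ 2 ^ (L.length * (L.length - 1) / 2) * 2 ^ L.length :=
          Nat.mul_le_mul ih Nat.lt_two_pow_self
      _ = 2 ^ ((i :: L).length * ((i :: L).length - 1) / 2) := by
          rw [← pow_add, List.length_cons, Nat.triangle_succ]

end expTerms

section expDerivPoly

variable {f : (Fin d → ℝ) → ℝ} {i : Fin d} {t : List (List (Fin d))}

theorem differentiable_derivProd (ht : ∀ B ∈ t, Differentiable ℝ (listDeriv B f)) :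
    Differentiable ℝ (derivProd f t) := by
  induction t with
  | nil => exact differentiable_const 1
  | cons B t ih =>
    simp only [List.mem_cons, forall_eq_or_imp] at ht
    exact ht.1.mul (ih ht.2)

theorem coordDeriv_derivProd (ht : ∀ B ∈ t, Differentiable ℝ (listDeriv B f)) :
    coordDeriv i (derivProd f t) = ((leibnizTerms i t).map (derivProd f)).sum := by
  induction t with
  | nil => funext x; simp [derivProd, leibnizTerms, coordDeriv]
  | cons B t ih =>
    simp only [List.mem_cons, forall_eq_or_imp] at ht
    have hprod : derivProd f (B :: t) = listDeriv B f * derivProd f t := rfl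
    rw [hprod, coordDeriv_mul ht.1 (differentiable_derivProd ht.2), ih ht.2, leibnizTerms,
      List.map_cons, List.sum_cons, List.map_map, ← List.sum_map_mul_left]
    rfl

theorem derivProd_append_singleton :
    derivProd f (t ++ [[i]]) = derivProd f t * coordDeriv i f := by
  simp [derivProd]

theorem expDerivPoly_cons (i : Fin d) (L : List (Fin d)) :
    expDerivPoly f (i :: L) = expDerivPoly f L * coordDeriv i f +
      (((expTerms L).flatMap (leibnizTerms i)).map (derivProd f)).sum := by
  have happend : (((expTerms L).map (· ++ [[i]])).map (derivProd f)).sum =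
      expDerivPoly f L * coordDeriv i f := by
    simp [expDerivPoly, derivProd_append_singleton, Function.comp_def, List.sum_map_mul_right]
  rw [← happend, ← List.sum_append, ← List.map_append]
  rfl

variable {m : ℕ} {L : List (Fin d)}

theorem differentiable_listDeriv_of_mem_expTerms (hf : ContDiff ℝ m f) (hL : L.length < m)
    (ht : t ∈ expTerms L) : ∀ B ∈ t, Differentiable ℝ (listDeriv B f) :=
  fun B hB =>
    differentiable_listDeriv hf ((block_length_le_of_mem_expTerms ht B hB).trans_lt hL)

theorem differentiable_derivProd_of_mem_expTerms (hf : ContDiff ℝ m f) (hL : L.length < m) :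
    ∀ g ∈ (expTerms L).map (derivProd f), Differentiable ℝ g := by
  simpa using fun t ht =>
    differentiable_derivProd (differentiable_listDeriv_of_mem_expTerms hf hL ht)

theorem differentiable_expDerivPoly (hf : ContDiff ℝ m f) (hL : L.length < m) :
    Differentiable ℝ (expDerivPoly f L) :=
  differentiable_list_sum (differentiable_derivProd_of_mem_expTerms hf hL)

theorem coordDeriv_expDerivPoly (hf : ContDiff ℝ m f) (hL : L.length < m) :
    coordDeriv i (expDerivPoly f L) =
      (((expTerms L).flatMap (leibnizTerms i)).map (derivProd f)).sum := by
  rw [expDerivPoly, coordDeriv_list_sum (differentiable_derivProd_of_mem_expTerms hf hL),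
    List.map_map, List.map_congr_left (f := coordDeriv i ∘ derivProd f)
      (g := fun t => ((leibnizTerms i t).map (derivProd f)).sum)
      fun t ht => coordDeriv_derivProd (differentiable_listDeriv_of_mem_expTerms hf hL ht)]
  simp [List.flatMap, List.sum_flatten, List.map_flatten, Function.comp_def]

theorem listDeriv_exp (hf : ContDiff ℝ m f) (hL : L.length ≤ m) :
    listDeriv L (fun x => exp (f x)) = expDerivPoly f L * fun x => exp (f x) := by
  induction L with
  | nil => simp [expDerivPoly, expTerms, derivProd]
  | cons i L ih =>
    simp only [List.length_cons] at hL
    have hf₁ : Differentiable ℝ f := hf.differentiable (by exact_mod_cast (by omega : m ≠ 0))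
    rw [listDeriv_cons, ih (by omega),
      coordDeriv_mul (differentiable_expDerivPoly hf hL) hf₁.exp, coordDeriv_exp hf₁,
      coordDeriv_expDerivPoly hf hL, expDerivPoly_cons]
    ring

end expDerivPoly

def indexList (α : Fin d → ℕ) : List (Fin d) :=
  (List.finRange d).flatMap fun i => List.replicate (α i) i

theorem length_indexList (α : Fin d → ℕ) : (indexList α).length = ∑ i, α i := by
  simp [indexList, List.length_flatMap, Fin.sum_univ_def]

theorem count_indexList (α : Fin d → ℕ) (j : Fin d) : (indexList α).count j = α j := by
  simp [indexList, List.count_flatMap, List.count_replicate, ← Fin.sum_univ_def,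
    Function.comp_def]

theorem indexList_count_perm (L : List (Fin d)) : (indexList fun j => L.count j).Perm L :=
  List.perm_iff_count.mpr fun j => count_indexList _ j

theorem pderivMulti_eq_foldr (α : Fin d → ℕ) (h : (Fin d → ℝ) → ℝ) :
    pderivMulti α h = (indexList α).foldr pderivCoord h := by
  rw [pderivMulti, indexList, List.foldr_flatMap]
  congr
  funext i g
  induction α i with
  | zero => rfl
  | succ n ih => rw [Function.iterate_succ_apply', ih, List.replicate_succ, List.foldr_cons]

section CmNorm

variable {m : ℕ} {h : (Fin d → ℝ) → ℝ}

theorem foldr_pderivCoord_eq_listDeriv (hh : ContDiff ℝ m h) {L : List (Fin d)}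
    (hL : L.length ≤ m) : L.foldr pderivCoord h = listDeriv L h := by
  induction L with
  | nil => rfl
  | cons i L ih =>
    simp only [List.length_cons] at hL
    rw [List.foldr_cons, ih (by omega),
      pderivCoord_eq_coordDeriv (differentiable_listDeriv hh (by omega))]
    rfl

theorem pderivMulti_eq_listDeriv (hh : ContDiff ℝ m h) {α : Fin d → ℕ} (hα : ∑ i, α i ≤ m) :
    pderivMulti α h = listDeriv (indexList α) h := by
  rw [pderivMulti_eq_foldr, foldr_pderivCoord_eq_listDeriv hh (by rwa [length_indexList])]

instance : Nonempty (cube d) := ⟨⟨0, le_rfl, zero_le_one⟩⟩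

instance : Finite {α : Fin d → ℕ // ∑ i, α i ≤ m} :=
  ((Set.finite_Iic fun _ => m).subset fun α (hα : ∑ i, α i ≤ m) i =>
    (Finset.single_le_sum (fun j _ => Nat.zero_le (α j)) (Finset.mem_univ i)).trans hα)
    |>.to_subtype

theorem bddAbove_range_abs_cube {g : (Fin d → ℝ) → ℝ} (hg : Continuous g) :
    BddAbove (Set.range fun x : cube d => |g x|) := by
  rw [← Set.image_eq_range (fun y => |g y|) (cube d)]
  exact (isCompact_Icc : IsCompact (cube d)).bddAbove_image hg.abs.continuousOn

theorem abs_pderivMulti_le_CmNorm (hh : ContDiff ℝ m h) {α : Fin d → ℕ} (hα : ∑ i, α i ≤ m)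
    {x : Fin d → ℝ} (hx : x ∈ cube d) : |pderivMulti α h x| ≤ CmNorm m h := by
  have hcont : Continuous (pderivMulti α h) := by
    rw [pderivMulti_eq_listDeriv hh hα]
    exact (contDiff_listDeriv hh _ (k := 0) (by rwa [length_indexList, add_zero])).continuous
  calc |pderivMulti α h x| ≤ ⨆ y : cube d, |pderivMulti α h y| :=
        le_ciSup (bddAbove_range_abs_cube hcont) ⟨x, hx⟩
    _ ≤ CmNorm m h :=
        le_ciSup (f := fun β : {β : Fin d → ℕ // ∑ i, β i ≤ m} =>
          ⨆ y : cube d, |pderivMulti β.1 h y|) (Set.finite_range _).bddAbove ⟨α, hα⟩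

theorem abs_listDeriv_le_CmNorm (hh : ContDiff ℝ m h) {B : List (Fin d)} (hB : B.length ≤ m)
    {x : Fin d → ℝ} (hx : x ∈ cube d) : |listDeriv B h x| ≤ CmNorm m h := by
  have hperm := indexList_count_perm B
  have hsum : ∑ j, B.count j ≤ m := by rwa [← length_indexList, hperm.length_eq]
  rw [← listDeriv_perm hh hperm (by rwa [hperm.length_eq]), ← pderivMulti_eq_listDeriv hh hsum]
  exact abs_pderivMulti_le_CmNorm hh hsum hx

end CmNorm

section bounds

variable {m : ℕ} {f : (Fin d → ℝ) → ℝ} {L : List (Fin d)} {x : Fin d → ℝ}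

theorem abs_derivProd_le (hf : ContDiff ℝ m f) (hL : L.length ≤ m) {t : List (List (Fin d))}
    (ht : t ∈ expTerms L) (hx : x ∈ cube d) : |derivProd f t x| ≤ max 1 (CmNorm m f) ^ m := by
  have hfactor : ∀ a ∈ t.map (listDeriv · f x), |a| ≤ max 1 (CmNorm m f) := by
    simp only [List.mem_map]
    rintro _ ⟨B, hB, rfl⟩
    exact (abs_listDeriv_le_CmNorm hf
      ((block_length_le_of_mem_expTerms ht B hB).trans hL) hx).trans (le_max_right _ _)
  calc |derivProd f t x| = |(t.map (listDeriv · f x)).prod| := by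
        rw [derivProd, Pi.list_prod_apply, List.map_map]
        rfl
    _ ≤ max 1 (CmNorm m f) ^ t.length := by
        simpa using List.abs_prod_le_pow_length hfactor
    _ ≤ max 1 (CmNorm m f) ^ m :=
        pow_le_pow_right₀ (le_max_left _ _) ((length_le_of_mem_expTerms ht).trans hL)

theorem abs_listDeriv_exp_le (hf : ContDiff ℝ m f) (hL : L.length ≤ m) (hx : x ∈ cube d) :
    |listDeriv L (fun y => exp (f y)) x| ≤
      2 ^ (m * (m - 1) / 2) * max 1 (CmNorm m f) ^ m * exp (f x) := by
  have hcount : ((expTerms L).length : ℝ) ≤ 2 ^ (m * (m - 1) / 2) := by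
    exact_mod_cast (length_expTerms_le L).trans (Nat.pow_le_pow_right two_pos
      (Nat.div_le_div_right (Nat.mul_le_mul hL (Nat.sub_le_sub_right hL 1))))
  have hpoly : |expDerivPoly f L x| ≤ (expTerms L).length * max 1 (CmNorm m f) ^ m := by
    rw [expDerivPoly, Pi.list_sum_apply, List.map_map]
    refine (List.abs_sum_le_length_mul (C := max 1 (CmNorm m f) ^ m) ?_).trans_eq (by simp)
    simp only [List.mem_map]
    rintro _ ⟨t, ht, rfl⟩
    exact abs_derivProd_le hf hL ht hx
  rw [listDeriv_exp hf hL, Pi.mul_apply, abs_mul, abs_of_pos (exp_pos _)]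
  gcongr
  exact hpoly.trans (by gcongr)

end bounds

theorem cmNorm_exp_le_general (d m : ℕ) (f : (Fin d → ℝ) → ℝ)
    (hf : ContDiff ℝ m f) :
    CmNorm m (fun x => Real.exp (f x)) ≤
      2 ^ (m * (m - 1) / 2) * max 1 (CmNorm m f) ^ m *
        ⨆ x : cube d, |Real.exp (f x.1)| := by
  have hsup : ∀ x : cube d, exp (f x) ≤ ⨆ y : cube d, |exp (f y.1)| := fun x => by
    simpa using le_ciSup (bddAbove_range_abs_cube hf.exp.continuous) x
  have : Nonempty {α : Fin d → ℕ // ∑ i, α i ≤ m} := ⟨⟨0, by simp⟩⟩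
  refine ciSup_le fun α => ciSup_le fun x => ?_
  rw [pderivMulti_eq_listDeriv hf.exp α.2]
  refine (abs_listDeriv_exp_le hf (by rw [length_indexList]; exact α.2) x.2).trans ?_
  gcongr
  exact hsup x

/-- Lemma D.8: for `f ∈ C^m([0,1]^d)`,
`‖e^f‖_{C^m} ≤ 2^{m(m−1)/2} max{1, ‖f‖_{C^m}}^m ‖e^f‖_∞`. -/
theorem cmNorm_exp_le (d m : ℕ) (hd : 1 ≤ d) (f : (Fin d → ℝ) → ℝ)
    (hf : ContDiff ℝ m f) :
    CmNorm m (fun x => Real.exp (f x)) ≤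
      2 ^ (m * (m - 1) / 2) * max 1 (CmNorm m f) ^ m *
        ⨆ x : cube d, |Real.exp (f x.1)| :=
  cmNorm_exp_le_general d m f hf
end
end
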